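/- Lemma 1 (upper bound on the number of high-level advertisements under constant capacity): Suppose Λ·(1 − (u+p)/(m·H^α)) ≥ S, so that high-level advertisement yields demand at least S from every reputation in [0,1]. Define the heuristic advertisement sequence A^h recursively along the constant-capacity trajectory started from R_1 ∈ [0,1] by: A^h_i = L if D(f(R^h_i, L)) ≥ S, and A^h_i = H otherwise. Let h* be the number of periods i with A^h_i = H. Then every advertisement sequence W ∈ {L,H}^N whose number of high-level advertisements is at least h* satisfies Π_S(W, R_1) ≤ Π_S(A^h, R_1). Consequently, the number of high-level advertisements in any optimal sequence is at most h*. -/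

import Mathlib

noncomputable section

/-- Post-advertisement reputation map. -/
def frep (α R a : ℝ) : ℝ := R + (1 - R) * a ^ α

/-- Demand function. -/
def dem (Λ q x : ℝ) : ℝ := if 0 < x then max 0 (Λ * (1 - q / x)) else 0

/-- Constant-capacity reputation trajectory (0-indexed periods), capacity `S`. -/
def repC (α w Λ q S : ℝ) (A : ℕ → ℝ) (R1 : ℝ) : ℕ → ℝ
  | 0 => R1
  | i + 1 =>
      let R' := frep α (repC α w Λ q S A R1 i) (A i)
      let d := dem Λ q R'
      (1 - w) * R' + w * (if 0 < d then min S d / d else R')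

/-- Constant-capacity total profit over horizon `N`. -/
def profitC (α w Λ q S p c cA : ℝ) (A : ℕ → ℝ) (R1 : ℝ) (N : ℕ) : ℝ :=
  ∑ i ∈ Finset.range N,
    (p * min S (dem Λ q (frep α (repC α w Λ q S A R1 i) (A i)))
      - c * S - cA * A i)

/-- The heuristic advertisement decision of Lemma 1: low level iff low-level
advertisement already yields demand at least the capacity `S`. -/
def heurAd (α Λ q S L H : ℝ) (R : ℝ) : ℝ :=
  if S ≤ dem Λ q (frep α R L) then L else H

/-- The reputation trajectory under the heuristic advertisement rule and the
constant-capacity dynamics. -/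
def heurRep (α w Λ q S L H R1 : ℝ) : ℕ → ℝ
  | 0 => R1
  | i + 1 =>
      let R := heurRep α w Λ q S L H R1 i
      let R' := frep α R (heurAd α Λ q S L H R)
      let d := dem Λ q R'
      (1 - w) * R' + w * (if 0 < d then min S d / d else R')

/-! The heuristic never leaves demand below the capacity `S` (with `L` by its rule, with `H` by
the hypothesis on `H ^ α`, since reputations stay nonnegative and demand grows with reputation),
so every period it sells exactly `S` and earns the largest possible revenue `p * S`. Any other
sequence earns at most `p * S` per period, and with at least as many high-level advertisements
it pays at least as much for advertising. -/

section TwoValued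

variable {ι : Type*} {s : Finset ι} {L H : ℝ}

theorem Finset.sum_eq_of_forall_eq_or_eq {V : ι → ℝ} (hV : ∀ i ∈ s, V i = L ∨ V i = H) :
    ∑ i ∈ s, V i = s.card * L + (s.filter (fun i => V i = H)).card * (H - L) := by
  have hsplit : ∀ i ∈ s, V i = L + if V i = H then H - L else 0 := by
    intro i hi
    split_ifs with h
    · rw [h]; ring
    · rcases hV i hi with h' | h'
      · rw [h', add_zero]
      · exact absurd h' h
  rw [Finset.sum_congr rfl hsplit, Finset.sum_add_distrib, Finset.sum_const, nsmul_eq_mul,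
    ← Finset.sum_filter, Finset.sum_const, nsmul_eq_mul]

theorem Finset.sum_le_sum_of_card_filter_le {U V : ι → ℝ} (hLH : L ≤ H)
    (hU : ∀ i ∈ s, U i = L ∨ U i = H) (hV : ∀ i ∈ s, V i = L ∨ V i = H)
    (hcard : (s.filter (fun i => U i = H)).card ≤ (s.filter (fun i => V i = H)).card) :
    ∑ i ∈ s, U i ≤ ∑ i ∈ s, V i := by
  rw [Finset.sum_eq_of_forall_eq_or_eq hU, Finset.sum_eq_of_forall_eq_or_eq hV]
  gcongr

end TwoValued

section Dynamics

variable {α w Λ q S R a x y : ℝ}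

theorem rpow_mem_Icc_zero_one (hα : 0 ≤ α) (ha0 : 0 ≤ a) (ha1 : a ≤ 1) :
    0 ≤ a ^ α ∧ a ^ α ≤ 1 :=
  ⟨Real.rpow_nonneg ha0 α, Real.rpow_le_one ha0 ha1 hα⟩

theorem frep_nonneg (hα : 0 ≤ α) (ha0 : 0 ≤ a) (ha1 : a ≤ 1) (hR : 0 ≤ R) :
    0 ≤ frep α R a := by
  obtain ⟨h0, h1⟩ := rpow_mem_Icc_zero_one hα ha0 ha1
  unfold frep
  nlinarith

theorem rpow_le_frep (hα : 0 ≤ α) (ha0 : 0 ≤ a) (ha1 : a ≤ 1) (hR : 0 ≤ R) :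
    a ^ α ≤ frep α R a := by
  obtain ⟨-, h1⟩ := rpow_mem_Icc_zero_one hα ha0 ha1
  unfold frep
  nlinarith

theorem le_dem (hx : 0 < x) : Λ * (1 - q / x) ≤ dem Λ q x := by
  rw [dem, if_pos hx]
  exact le_max_right _ _

theorem dem_le_dem (hΛ : 0 ≤ Λ) (hq : 0 ≤ q) (hx : 0 < x) (hxy : x ≤ y) :
    dem Λ q x ≤ dem Λ q y := by
  have hy : 0 < y := hx.trans_le hxy
  rw [dem, dem, if_pos hx, if_pos hy]
  gcongr

theorem reputation_update_nonneg (hw0 : 0 ≤ w) (hw1 : w ≤ 1) (hS : 0 ≤ S) (hR : 0 ≤ R) :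
    0 ≤ (1 - w) * R + w * (if 0 < dem Λ q R then min S (dem Λ q R) / dem Λ q R else R) := by
  have hfill : 0 ≤ if 0 < dem Λ q R then min S (dem Λ q R) / dem Λ q R else R := by
    split_ifs with hd
    · exact div_nonneg (le_min hS hd.le) hd.le
    · exact hR
  have : 0 ≤ 1 - w := by linarith
  positivity

end Dynamics

section Profit

variable {α w Λ q S p c cA R1 : ℝ} {N : ℕ} {A : ℕ → ℝ}

theorem profitC_eq_sum :
    profitC α w Λ q S p c cA A R1 N =
      ∑ i ∈ Finset.range N, p * min S (dem Λ q (frep α (repC α w Λ q S A R1 i) (A i)))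
        - N * (c * S) - cA * ∑ i ∈ Finset.range N, A i := by
  rw [profitC, Finset.sum_sub_distrib, Finset.sum_sub_distrib, Finset.sum_const,
    Finset.card_range, nsmul_eq_mul, Finset.mul_sum]

theorem profitC_le (hp : 0 ≤ p) :
    profitC α w Λ q S p c cA A R1 N ≤ N * (p * S - c * S) - cA * ∑ i ∈ Finset.range N, A i := by
  have hrevenue : ∑ i ∈ Finset.range N, p * min S (dem Λ q (frep α (repC α w Λ q S A R1 i) (A i)))
      ≤ ∑ _i ∈ Finset.range N, p * S :=
    Finset.sum_le_sum fun i _ => mul_le_mul_of_nonneg_left (min_le_left _ _) hp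
  rw [profitC_eq_sum]
  simp only [Finset.sum_const, Finset.card_range, nsmul_eq_mul] at hrevenue
  linarith

theorem profitC_eq_of_le_dem
    (hdem : ∀ i ∈ Finset.range N, S ≤ dem Λ q (frep α (repC α w Λ q S A R1 i) (A i))) :
    profitC α w Λ q S p c cA A R1 N = N * (p * S - c * S) - cA * ∑ i ∈ Finset.range N, A i := by
  rw [profitC_eq_sum, Finset.sum_congr rfl fun i hi => by rw [min_eq_left (hdem i hi)]]
  simp only [Finset.sum_const, Finset.card_range, nsmul_eq_mul]
  ring

end Profit

section Heuristic

variable {α w Λ q S L H R1 R : ℝ}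

theorem heurAd_eq_or_eq (R : ℝ) : heurAd α Λ q S L H R = L ∨ heurAd α Λ q S L H R = H := by
  unfold heurAd
  split_ifs
  exacts [Or.inl rfl, Or.inr rfl]

theorem heurAd_mem_Icc (hL0 : 0 ≤ L) (hLH : L ≤ H) (hH1 : H ≤ 1) (R : ℝ) :
    0 ≤ heurAd α Λ q S L H R ∧ heurAd α Λ q S L H R ≤ 1 := by
  obtain h | h : heurAd α Λ q S L H R = L ∨ _ := heurAd_eq_or_eq R <;>
    rw [h] <;> constructor <;> linarith

theorem repC_heurAd :
    repC α w Λ q S (fun j => heurAd α Λ q S L H (heurRep α w Λ q S L H R1 j)) R1 =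
      heurRep α w Λ q S L H R1 := by
  funext i
  induction i with
  | zero => rfl
  | succ i ih => simp only [repC, heurRep, ih]

theorem heurRep_nonneg (hα : 0 ≤ α) (hw0 : 0 ≤ w) (hw1 : w ≤ 1) (hL0 : 0 ≤ L) (hLH : L ≤ H)
    (hH1 : H ≤ 1) (hS : 0 ≤ S) (hR1 : 0 ≤ R1) (i : ℕ) :
    0 ≤ heurRep α w Λ q S L H R1 i := by
  induction i with
  | zero => exact hR1
  | succ i ih =>
    obtain ⟨ha0, ha1⟩ := heurAd_mem_Icc (α := α) (Λ := Λ) (q := q) (S := S) hL0 hLH hH1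
      (heurRep α w Λ q S L H R1 i)
    exact reputation_update_nonneg hw0 hw1 hS (frep_nonneg hα ha0 ha1 ih)

theorem le_dem_heurAd (hα : 0 ≤ α) (hΛ : 0 ≤ Λ) (hq : 0 ≤ q) (hH0 : 0 < H) (hH1 : H ≤ 1)
    (hHdem : S ≤ Λ * (1 - q / H ^ α)) (hR : 0 ≤ R) :
    S ≤ dem Λ q (frep α R (heurAd α Λ q S L H R)) := by
  unfold heurAd
  split_ifs with hlow
  · exact hlow
  · have hHα : 0 < H ^ α := Real.rpow_pos_of_pos hH0 α
    calc S ≤ Λ * (1 - q / H ^ α) := hHdem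
      _ ≤ dem Λ q (H ^ α) := le_dem hHα
      _ ≤ dem Λ q (frep α R H) := dem_le_dem hΛ hq hHα (rpow_le_frep hα hH0.le hH1 hR)

end Heuristic

theorem upper_bound_on_high_ads_constant_capacity_general
    (Λ c p cA m u α w L H S q : ℝ) (N : ℕ)
    (hΛ : 0 < Λ) (hc : 0 < c) (hcp : c < p) (hcA : 0 ≤ cA)
    (hm : 0 < m) (hu : 0 ≤ u) (hqdef : q = (u + p) / m)
    (hα : 0 < α) (hw0 : 0 ≤ w) (hw1 : w ≤ 1)
    (hL0 : 0 ≤ L) (hLH : L < H) (hH1 : H ≤ 1)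
    (hS0 : 0 < S)
    (hHdem : S ≤ Λ * (1 - q / H ^ α))
    (R1 : ℝ) (hR10 : 0 ≤ R1) :
    ∀ W : ℕ → ℝ, (∀ i, W i = L ∨ W i = H) →
      ((Finset.range N).filter
          (fun i => heurAd α Λ q S L H (heurRep α w Λ q S L H R1 i) = H)).card ≤
        ((Finset.range N).filter (fun i => W i = H)).card →
      profitC α w Λ q S p c cA W R1 N ≤
        profitC α w Λ q S p c cA
          (fun i => heurAd α Λ q S L H (heurRep α w Λ q S L H R1 i)) R1 N := by
  intro W hW hcard
  have hp : 0 ≤ p := (hc.trans hcp).le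
  have hq : 0 ≤ q := hqdef ▸ by positivity
  have hheur_dem : ∀ i ∈ Finset.range N, S ≤ dem Λ q (frep α
      (repC α w Λ q S (fun j => heurAd α Λ q S L H (heurRep α w Λ q S L H R1 j)) R1 i)
      (heurAd α Λ q S L H (heurRep α w Λ q S L H R1 i))) := fun i _ => by
    rw [repC_heurAd]
    exact le_dem_heurAd hα.le hΛ.le hq (hL0.trans_lt hLH) hH1 hHdem
      (heurRep_nonneg hα.le hw0 hw1 hL0 hLH.le hH1 hS0.le hR10 i)
  have hcost : ∑ i ∈ Finset.range N, heurAd α Λ q S L H (heurRep α w Λ q S L H R1 i) ≤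
      ∑ i ∈ Finset.range N, W i :=
    Finset.sum_le_sum_of_card_filter_le hLH.le (fun i _ => heurAd_eq_or_eq _)
      (fun i _ => hW i) hcard
  calc profitC α w Λ q S p c cA W R1 N
      ≤ N * (p * S - c * S) - cA * ∑ i ∈ Finset.range N, W i := profitC_le hp
    _ ≤ N * (p * S - c * S) - cA * ∑ i ∈ Finset.range N,
          heurAd α Λ q S L H (heurRep α w Λ q S L H R1 i) := by gcongr
    _ = _ := (profitC_eq_of_le_dem hheur_dem).symm

/-- Lemma 1: if high-level advertisement yields demand at least `S` from every
reputation, then any advertisement sequence using at least as many high-level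
advertisements as the heuristic rule earns at most the heuristic's profit. -/
theorem upper_bound_on_high_ads_constant_capacity
    (Λ c p cA m u α w L H S q : ℝ) (N : ℕ)
    (hΛ : 0 < Λ) (hc : 0 < c) (hcp : c < p) (hcA : 0 ≤ cA)
    (hm : 0 < m) (hu : 0 ≤ u) (hqdef : q = (u + p) / m) (hq1 : q < 1)
    (hα : 0 < α) (hw0 : 0 ≤ w) (hw1 : w ≤ 1)
    (hL0 : 0 ≤ L) (hLH : L < H) (hH1 : H ≤ 1)
    (hS0 : 0 < S) (hSΛ : S ≤ Λ)
    (hHdem : S ≤ Λ * (1 - q / H ^ α))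
    (R1 : ℝ) (hR10 : 0 ≤ R1) (hR11 : R1 ≤ 1) :
    ∀ W : ℕ → ℝ, (∀ i, W i = L ∨ W i = H) →
      ((Finset.range N).filter
          (fun i => heurAd α Λ q S L H (heurRep α w Λ q S L H R1 i) = H)).card ≤
        ((Finset.range N).filter (fun i => W i = H)).card →
      profitC α w Λ q S p c cA W R1 N ≤
        profitC α w Λ q S p c cA
          (fun i => heurAd α Λ q S L H (heurRep α w Λ q S L H R1 i)) R1 N :=
  upper_bound_on_high_ads_constant_capacity_general Λ c p cA m u α w L H S q N hΛ hc hcp hcA hm hu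
    hqdef hα hw0 hw1 hL0 hLH hH1 hS0 hHdem R1 hR10
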